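/- arXiv:1506.02144 — 3 statements merged into one kernel-verified Lean document; each statement's English description precedes it below -/
import Mathlib

section
/- Let h ∈ ℝ and let α : U → ℝ be smooth, and define X₀(u) = −α(u)(H(u)−h)[∇C(u) × (∇H(u) × ∇C(u))]. Then for every u ∈ U one has ⟨X(u) + X₀(u), ∇H(u)⟩ = −α(u)(H(u)−h)·‖∇H(u) × ∇C(u)‖². Consequently, along any differentiable solution u(t) of du/dt = X(u) + X₀(u), the function t ↦ H(u(t)) − h satisfies (d/dt)(H(u(t)) − h) = −α(u(t))‖∇H(u(t)) × ∇C(u(t))‖² · (H(u(t)) − h). -/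
open scoped RealInnerProductSpace

noncomputable section

abbrev E3 := EuclideanSpace ℝ (Fin 3)

/-- The cross product on `EuclideanSpace ℝ (Fin 3)`. -/
noncomputable def cross3 (a b : E3) : E3 :=
  (WithLp.equiv 2 (Fin 3 → ℝ)).symm
    (crossProduct (WithLp.equiv 2 (Fin 3 → ℝ) a) (WithLp.equiv 2 (Fin 3 → ℝ) b))

/-!
The Hamiltonian part `X = ν (∇H × ∇C)` is orthogonal to `∇H`, so only the damping term `X₀`
contributes to `⟪X + X₀, ∇H⟫`; by cyclicity of the triple product,
`⟪∇C × (∇H × ∇C), ∇H⟫ = ‖∇H × ∇C‖²`. The chain rule `d/dt H(u(t)) = ⟪u'(t), ∇H(u(t))⟫`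
then turns this pointwise identity into the linear ODE for `H(u(t)) - h`.
-/

theorem HasGradientAt.hasDerivAt_comp {F : Type*} [NormedAddCommGroup F]
    [InnerProductSpace ℝ F] [CompleteSpace F] {f : F → ℝ} {f' v : F} {γ : ℝ → F} {t : ℝ}
    (hf : HasGradientAt f f' (γ t)) (hγ : HasDerivAt γ v t) :
    HasDerivAt (f ∘ γ) ⟪v, f'⟫ t := by
  simpa [real_inner_comm] using hf.hasFDerivAt.comp_hasDerivAt t hγ

theorem inner_cross3_self_left (a b : E3) : ⟪cross3 a b, a⟫ = 0 := by
  simp [cross3, cross_apply, PiLp.inner_apply, Fin.sum_univ_three]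
  ring

theorem inner_cross3_left_cyclic (a b c : E3) : ⟪cross3 a b, c⟫ = ⟪b, cross3 c a⟫ := by
  simp [cross3, cross_apply, PiLp.inner_apply, Fin.sum_univ_three]
  ring

theorem inner_cross3_cross3_cross3 (a c : E3) :
    ⟪cross3 c (cross3 a c), a⟫ = ‖cross3 a c‖ ^ 2 := by
  rw [inner_cross3_left_cyclic, real_inner_self_eq_norm_sq]

theorem inner_smul_cross3_add_smul_cross3_cross3 (ν β : ℝ) (a c : E3) :
    ⟪ν • cross3 a c + β • cross3 c (cross3 a c), a⟫ = β * ‖cross3 a c‖ ^ 2 := by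
  rw [inner_add_left, real_inner_smul_left, real_inner_smul_left, inner_cross3_self_left,
    inner_cross3_cross3_cross3, mul_zero, zero_add]

theorem stmt_4_general (U : Set E3) (hU : IsOpen U) (ν H C : E3 → ℝ)
    (hH : ContDiffOn ℝ (⊤ : ℕ∞) H U)
    (X : E3 → E3) (hX : ∀ u, X u = ν u • cross3 (gradient H u) (gradient C u))
    (h : ℝ) (α : E3 → ℝ)
    (X₀ : E3 → E3)
    (hX₀ : ∀ u, X₀ u =
      -(α u * (H u - h)) • cross3 (gradient C u) (cross3 (gradient H u) (gradient C u))) :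
    (∀ u ∈ U, ⟪X u + X₀ u, gradient H u⟫ =
      -(α u * (H u - h)) * ‖cross3 (gradient H u) (gradient C u)‖ ^ 2) ∧
    (∀ γ : ℝ → E3, (∀ t, γ t ∈ U) →
      (∀ t, HasDerivAt γ (X (γ t) + X₀ (γ t)) t) →
      ∀ t, HasDerivAt (fun s => H (γ s) - h)
        (-(α (γ t)) * ‖cross3 (gradient H (γ t)) (gradient C (γ t))‖ ^ 2 * (H (γ t) - h)) t) := by
  have hinner : ∀ u, ⟪X u + X₀ u, gradient H u⟫ =
      -(α u * (H u - h)) * ‖cross3 (gradient H u) (gradient C u)‖ ^ 2 := fun u => by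
    rw [hX, hX₀, inner_smul_cross3_add_smul_cross3_cross3]
  refine ⟨fun u _ => hinner u, fun γ hγU hγ t => ?_⟩
  have hgrad : HasGradientAt H (gradient H (γ t)) (γ t) :=
    (hH.differentiableOn (by simp)).hasGradientAt (hU.mem_nhds (hγU t))
  have hcomp := (hgrad.hasDerivAt_comp (hγ t)).sub_const h
  rw [hinner] at hcomp
  exact hcomp.congr_deriv (by ring)

/-- For `X₀(u) = −α(u)(H(u)−h)[∇C(u) × (∇H(u) × ∇C(u))]` we have
`⟨X(u) + X₀(u), ∇H(u)⟩ = −α(u)(H(u)−h)‖∇H(u) × ∇C(u)‖²` on `U`; consequently, along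
any differentiable solution `u(t)` of `du/dt = X(u) + X₀(u)`, the function
`t ↦ H(u(t)) − h` satisfies
`(d/dt)(H(u(t)) − h) = −α(u(t))‖∇H(u(t)) × ∇C(u(t))‖² · (H(u(t)) − h)`. -/
theorem stmt_4 (U : Set E3) (hU : IsOpen U) (ν H C : E3 → ℝ)
    (hν : ContDiffOn ℝ (⊤ : ℕ∞) ν U) (hH : ContDiffOn ℝ (⊤ : ℕ∞) H U)
    (hC : ContDiffOn ℝ (⊤ : ℕ∞) C U)
    (X : E3 → E3) (hX : ∀ u, X u = ν u • cross3 (gradient H u) (gradient C u))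
    (h : ℝ) (α : E3 → ℝ) (hα : ContDiffOn ℝ (⊤ : ℕ∞) α U)
    (X₀ : E3 → E3)
    (hX₀ : ∀ u, X₀ u =
      -(α u * (H u - h)) • cross3 (gradient C u) (cross3 (gradient H u) (gradient C u))) :
    (∀ u ∈ U, ⟪X u + X₀ u, gradient H u⟫ =
      -(α u * (H u - h)) * ‖cross3 (gradient H u) (gradient C u)‖ ^ 2) ∧
    (∀ γ : ℝ → E3, (∀ t, γ t ∈ U) →
      (∀ t, HasDerivAt γ (X (γ t) + X₀ (γ t)) t) →
      ∀ t, HasDerivAt (fun s => H (γ s) - h)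
        (-(α (γ t)) * ‖cross3 (gradient H (γ t)) (gradient C (γ t))‖ ^ 2 * (H (γ t) - h)) t) :=
  stmt_4_general U hU ν H C hH X hX h α X₀ hX₀
end
end

section
/- Let c ∈ ℝ and let α : U → ℝ be smooth, and define X₁(u) = α(u)(C(u)−c)[∇H(u) × (∇H(u) × ∇C(u))]. Then for every u ∈ U: ⟨X(u) + X₁(u), ∇H(u)⟩ = 0, and ⟨X(u) + X₁(u), ∇C(u)⟩ = −α(u)(C(u)−c)·‖∇H(u) × ∇C(u)‖². Consequently, along any differentiable solution u(t) of du/dt = X(u) + X₁(u), the function H(u(t)) is constant (so each level set H⁻¹({h}) is dynamically invariant) and (d/dt)(C(u(t)) − c) = −α(u(t))‖∇H(u(t)) × ∇C(u(t))‖² · (C(u(t)) − c). -/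
open scoped RealInnerProductSpace

noncomputable section

open Matrix

lemma dot1 (a b : Fin 3 → ℝ) : (crossProduct a b) ⬝ᵥ a = 0 := by
  simp [crossProduct, dotProduct, Fin.sum_univ_three]; ring

lemma dot2 (a b : Fin 3 → ℝ) : (crossProduct a (crossProduct a b)) ⬝ᵥ a = 0 := by
  simp [crossProduct, dotProduct, Fin.sum_univ_three]; ring

lemma dot3 (a b : Fin 3 → ℝ) : (crossProduct a b) ⬝ᵥ b = 0 := by
  simp [crossProduct, dotProduct, Fin.sum_univ_three]; ring

lemma dot4 (a b : Fin 3 → ℝ) :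
    (crossProduct a (crossProduct a b)) ⬝ᵥ b = -((crossProduct a b) ⬝ᵥ (crossProduct a b)) := by
  simp [crossProduct, dotProduct, Fin.sum_univ_three]; ring

lemma inner_eq_dot (x y : E3) :
    ⟪x, y⟫ = (WithLp.equiv 2 (Fin 3 → ℝ) x) ⬝ᵥ (WithLp.equiv 2 (Fin 3 → ℝ) y) := by
  simp [PiLp.inner_apply, dotProduct, mul_comm]

/-- For `X₁(u) = α(u)(C(u)−c)[∇H(u) × (∇H(u) × ∇C(u))]` one has
`⟨X(u) + X₁(u), ∇H(u)⟩ = 0` and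
`⟨X(u) + X₁(u), ∇C(u)⟩ = −α(u)(C(u)−c)‖∇H(u) × ∇C(u)‖²` on `U`; consequently, along
any differentiable solution `u(t)` of `du/dt = X(u) + X₁(u)`, the function `H(u(t))`
is constant (so each level set `H⁻¹({h})` is dynamically invariant) and
`(d/dt)(C(u(t)) − c) = −α(u(t))‖∇H(u(t)) × ∇C(u(t))‖² · (C(u(t)) − c)`. -/
theorem stmt_18 (U : Set E3) (hU : IsOpen U) (ν H C : E3 → ℝ)
    (hν : ContDiffOn ℝ (⊤ : ℕ∞) ν U) (hH : ContDiffOn ℝ (⊤ : ℕ∞) H U)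
    (hC : ContDiffOn ℝ (⊤ : ℕ∞) C U)
    (X : E3 → E3) (hX : ∀ u, X u = ν u • cross3 (gradient H u) (gradient C u))
    (c : ℝ) (α : E3 → ℝ) (hα : ContDiffOn ℝ (⊤ : ℕ∞) α U)
    (X₁ : E3 → E3)
    (hX₁ : ∀ u, X₁ u =
      (α u * (C u - c)) • cross3 (gradient H u) (cross3 (gradient H u) (gradient C u))) :
    (∀ u ∈ U, ⟪X u + X₁ u, gradient H u⟫ = 0) ∧
    (∀ u ∈ U, ⟪X u + X₁ u, gradient C u⟫ =
      -(α u * (C u - c)) * ‖cross3 (gradient H u) (gradient C u)‖ ^ 2) ∧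
    (∀ γ : ℝ → E3, (∀ t, γ t ∈ U) →
      (∀ t, HasDerivAt γ (X (γ t) + X₁ (γ t)) t) →
      (∀ s t : ℝ, H (γ s) = H (γ t)) ∧
      (∀ t, HasDerivAt (fun s => C (γ s) - c)
        (-(α (γ t)) * ‖cross3 (gradient H (γ t)) (gradient C (γ t))‖ ^ 2 * (C (γ t) - c)) t)) := by
  have keyH : ∀ u, ⟪X u + X₁ u, gradient H u⟫ = 0 := by
    intro u
    rw [hX, hX₁, inner_add_left, real_inner_smul_left, real_inner_smul_left,
      inner_eq_dot, inner_eq_dot]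
    simp only [cross3, Equiv.apply_symm_apply, dot1, dot2]
    ring
  have keyC : ∀ u, ⟪X u + X₁ u, gradient C u⟫ =
      -(α u * (C u - c)) * ‖cross3 (gradient H u) (gradient C u)‖ ^ 2 := by
    intro u
    have hn : ‖cross3 (gradient H u) (gradient C u)‖ ^ 2 =
        (WithLp.equiv 2 (Fin 3 → ℝ) (cross3 (gradient H u) (gradient C u))) ⬝ᵥ
        (WithLp.equiv 2 (Fin 3 → ℝ) (cross3 (gradient H u) (gradient C u))) := by
      rw [← inner_eq_dot, real_inner_self_eq_norm_sq]
    rw [hX, hX₁, inner_add_left, real_inner_smul_left, real_inner_smul_left,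
      inner_eq_dot, inner_eq_dot, hn]
    simp only [cross3, Equiv.apply_symm_apply, dot3, dot4]
    ring
  refine ⟨fun u _ => keyH u, fun u _ => keyC u, fun γ hγ hγ' => ?_⟩
  have hHd : ∀ t, HasDerivAt (fun s => H (γ s)) 0 t := by
    intro t
    have hd : DifferentiableAt ℝ H (γ t) :=
      (hH.contDiffAt (hU.mem_nhds (hγ t))).differentiableAt (by simp)
    have hg := hd.hasGradientAt.hasFDerivAt
    have hcomp := hg.comp_hasDerivAt t (hγ' t)
    have hval : (InnerProductSpace.toDual ℝ E3 (gradient H (γ t))) (X (γ t) + X₁ (γ t)) = 0 := by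
      rw [InnerProductSpace.toDual_apply_apply, real_inner_comm]; exact keyH _
    rw [hval] at hcomp
    exact hcomp
  have hCd : ∀ t, HasDerivAt (fun s => C (γ s) - c)
      (-(α (γ t)) * ‖cross3 (gradient H (γ t)) (gradient C (γ t))‖ ^ 2 * (C (γ t) - c)) t := by
    intro t
    have hd : DifferentiableAt ℝ C (γ t) :=
      (hC.contDiffAt (hU.mem_nhds (hγ t))).differentiableAt (by simp)
    have hg := hd.hasGradientAt.hasFDerivAt
    have h2 : HasDerivAt (fun s => C (γ s)) ⟪X (γ t) + X₁ (γ t), gradient C (γ t)⟫ t := by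
      have hcomp := hg.comp_hasDerivAt t (hγ' t)
      have hval : (InnerProductSpace.toDual ℝ E3 (gradient C (γ t))) (X (γ t) + X₁ (γ t)) =
          ⟪X (γ t) + X₁ (γ t), gradient C (γ t)⟫ := by
        rw [InnerProductSpace.toDual_apply_apply, real_inner_comm]
      rw [hval] at hcomp
      exact hcomp
    rw [keyC (γ t)] at h2
    have h3 := h2.sub_const c
    convert h3 using 1
    · rfl
    · rfl
    ring
  refine ⟨fun s t => ?_, hCd⟩
  exact is_const_of_deriv_eq_zero (fun x => (hHd x).differentiableAt) (fun x => (hHd x).deriv) s t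
end
end

section
/- There do not exist smooth functions ν, C : ℝ³ → ℝ with ν nowhere vanishing such that the 1-form ω = y dx − x dy equals ν dC globally on ℝ³; i.e., there are no smooth ν, C on ℝ³ with ν(p) ≠ 0 for all p and ν·∂C/∂x = y, ν·∂C/∂y = −x, ν·∂C/∂z = 0 at every point (x,y,z) ∈ ℝ³. -/
/-!
Restrict `C` to the horizontal unit circle `γ θ = (cos θ, sin θ, 0)`. If `ω = ν dC`, then
`ν · dC(γ') = ω(γ') = -(sin² θ + cos² θ) = -1`, so `(C ∘ γ)'` never vanishes. But `C ∘ γ` is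
`2π`-periodic, so by Rolle's theorem its derivative vanishes somewhere on `(0, 2π)`.
-/

open scoped RealInnerProductSpace

noncomputable section

open Set

theorem exists_fderiv_apply_eq_zero_of_loop {E : Type*} [NormedAddCommGroup E] [NormedSpace ℝ E]
    {C : E → ℝ} {γ γ' : ℝ → E} {a b : ℝ} (hab : a < b) (hC : Differentiable ℝ C)
    (hγ : ∀ t, HasDerivAt γ (γ' t) t) (hloop : γ a = γ b) :
    ∃ t ∈ Ioo a b, fderiv ℝ C (γ t) (γ' t) = 0 := by
  have hCγ (t : ℝ) : HasDerivAt (C ∘ γ) (fderiv ℝ C (γ t) (γ' t)) t :=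
    (hC (γ t)).hasFDerivAt.comp_hasDerivAt t (hγ t)
  exact exists_hasDerivAt_eq_zero hab (fun t _ => (hCγ t).continuousAt.continuousWithinAt)
    (congrArg C hloop) fun t _ => hCγ t

def horizontalCircle (θ : ℝ) : E3 :=
  Real.cos θ • EuclideanSpace.single 0 1 + Real.sin θ • EuclideanSpace.single 1 1

theorem hasDerivAt_horizontalCircle (θ : ℝ) :
    HasDerivAt horizontalCircle
      (-Real.sin θ • EuclideanSpace.single 0 1 + Real.cos θ • EuclideanSpace.single 1 1) θ :=
  ((Real.hasDerivAt_cos θ).smul_const _).add ((Real.hasDerivAt_sin θ).smul_const _)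

theorem horizontalCircle_two_pi : horizontalCircle (2 * Real.pi) = horizontalCircle 0 := by
  simp [horizontalCircle]

@[simp] theorem horizontalCircle_apply_zero (θ : ℝ) : horizontalCircle θ 0 = Real.cos θ := by
  simp [horizontalCircle]

@[simp] theorem horizontalCircle_apply_one (θ : ℝ) : horizontalCircle θ 1 = Real.sin θ := by
  simp [horizontalCircle]

/-- The 1-form `ω = y dx − x dy` on `ℝ³` admits no global
representation `ω = ν dC` with `ν` smooth and nowhere vanishing and `C` smooth:
there are no smooth `ν, C : ℝ³ → ℝ` with `ν(p) ≠ 0` everywhere such that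
`ν·∂C/∂x = y`, `ν·∂C/∂y = −x` and `ν·∂C/∂z = 0` at every point `(x,y,z)`. -/
theorem stmt_19 :
    ¬ ∃ (ν C : E3 → ℝ), ContDiff ℝ (⊤ : ℕ∞) ν ∧ ContDiff ℝ (⊤ : ℕ∞) C ∧
      (∀ p : E3, ν p ≠ 0) ∧
      (∀ p : E3,
        ν p * fderiv ℝ C p (EuclideanSpace.single 0 (1:ℝ)) = p 1 ∧
        ν p * fderiv ℝ C p (EuclideanSpace.single 1 (1:ℝ)) = -(p 0) ∧
        ν p * fderiv ℝ C p (EuclideanSpace.single 2 (1:ℝ)) = 0) := by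
  rintro ⟨ν, C, -, hC, -, hω⟩
  obtain ⟨θ, -, hθ⟩ := exists_fderiv_apply_eq_zero_of_loop Real.two_pi_pos
    (hC.differentiable (by simp)) hasDerivAt_horizontalCircle horizontalCircle_two_pi.symm
  obtain ⟨hx, hy, -⟩ := hω (horizontalCircle θ)
  simp only [map_add, map_smul, smul_eq_mul, horizontalCircle_apply_zero,
    horizontalCircle_apply_one] at hθ hx hy
  have : (0 : ℝ) = -1 := by
    rw [← mul_zero (ν (horizontalCircle θ)), ← hθ]
    linear_combination (-Real.sin θ) * hx + Real.cos θ * hy - Real.sin_sq_add_cos_sq θ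
  norm_num at this
end
end
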